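/- arXiv:1803.06341 — 2 statements merged into one kernel-verified Lean document; each statement's English description precedes it below -/
import Mathlib

section
/- Let H be a history satisfying uniqueness of written values. Suppose the local history of a client C contains a transaction T1 with a read event r(x)v1 and, strictly later, a transaction T2 with a read event r(x)v2, where v1 ≠ ⊥ and v2 ≠ ⊥. Let W1 be the transaction of H containing the write event w(x)v1 and W2 the transaction containing the write event w(x)v2. Then in every transactional causal serialization for C of H, W2 does not strictly precede W1 in the serialization order; i.e., a later transaction of the same client cannot return a value for x whose writing transaction is serialized strictly before the writing transaction of the value returned earlier. -/
/-!
Combinatorial model of transactional histories.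
-/

/-- A transaction: a finite set of read events `(x, v)` (read of object `x`
returning value `v`) and a finite set of write events `(x, v)` (write of
value `v` to object `x`). -/
structure Tx (Obj : Type*) (Val : Type*) where
  reads : Set (Obj × Val)
  writes : Set (Obj × Val)
  reads_finite : reads.Finite
  writes_finite : writes.Finite

/-- A history: a set of clients, each with a finite sequence (list) of
transactions — its local history. -/
structure History (Client : Type*) (Obj : Type*) (Val : Type*) where
  locals : Client → List (Tx Obj Val)

variable {Client Obj Val : Type*}

/-- `T` is a transaction of the history `H`. -/
def TxIn (H : History Client Obj Val) (T : Tx Obj Val) : Prop :=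
  ∃ c : Client, T ∈ H.locals c

/-- `S` occurs strictly before `T` in the local history of client `c`. -/
def LocBefore (H : History Client Obj Val) (c : Client) (S T : Tx Obj Val) : Prop :=
  ∃ i j : ℕ, i < j ∧ (H.locals c)[i]? = some S ∧ (H.locals c)[j]? = some T

/-- `T` contains a write event on object `x`. -/
def WritesOn (T : Tx Obj Val) (x : Obj) : Prop :=
  ∃ v : Val, (x, v) ∈ T.writes

/-- Uniqueness of written values: every value written by a write event of the
history is distinct from `bot` and from the value written by every other
write event in the history. -/
def UniqueWrites (H : History Client Obj Val) (bot : Val) : Prop :=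
  (∀ T, TxIn H T → ∀ x v, (x, v) ∈ T.writes → v ≠ bot) ∧
  (∀ T T', TxIn H T → TxIn H T' → ∀ x x' v,
      (x, v) ∈ T.writes → (x', v) ∈ T'.writes → T = T' ∧ x = x')

/-- The causality relation of a history: the smallest transitive relation such
that `S` causally precedes `T` whenever (i) `S` occurs strictly before `T` in
some client's local history, or (ii) `S` contains a write event `w(x)v` and
`T` contains the read event `r(x)v`. -/
inductive Causal (H : History Client Obj Val) : Tx Obj Val → Tx Obj Val → Prop
  | prog {S T : Tx Obj Val} (c : Client) : LocBefore H c S T → Causal H S T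
  | readFrom {S T : Tx Obj Val} {x : Obj} {v : Val} :
      TxIn H S → TxIn H T → (x, v) ∈ S.writes → (x, v) ∈ T.reads → Causal H S T
  | trans {S T U : Tx Obj Val} : Causal H S T → Causal H T U → Causal H S U

/-- The set of transactions over which a serialization for client `C` ranges:
all transactions of the history containing at least one write event, together
with all transactions of `C`'s local history. -/
def Dom (H : History Client Obj Val) (C : Client) : Set (Tx Obj Val) :=
  {T | (TxIn H T ∧ T.writes.Nonempty) ∨ T ∈ H.locals C}

/-- `lt` is a transactional causal serialization for client `C` of history `H`:
a strict linear order on `Dom H C` such that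
(1) for every read event `r(x)v` with `v ≠ bot` in a transaction `T` of the
set, some transaction strictly preceding `T` contains a write event on `x`,
and the last such transaction contains the write event `w(x)v`;
(2) for every read event `r(x)bot` in a transaction `T` of the set, no
transaction strictly preceding `T` contains a write event on `x`;
(3) whenever a transaction `S` of the set causally precedes a transaction `T`
of the set, `S` strictly precedes `T`. -/
structure IsCausalSerialization (H : History Client Obj Val) (bot : Val)
    (C : Client) (lt : Tx Obj Val → Tx Obj Val → Prop) : Prop where
  irrefl : ∀ T ∈ Dom H C, ¬ lt T T
  trans : ∀ S ∈ Dom H C, ∀ T ∈ Dom H C, ∀ U ∈ Dom H C, lt S T → lt T U → lt S U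
  total : ∀ S ∈ Dom H C, ∀ T ∈ Dom H C, S ≠ T → lt S T ∨ lt T S
  read_val : ∀ T ∈ Dom H C, ∀ x v, (x, v) ∈ T.reads → v ≠ bot →
      ∃ W ∈ Dom H C, lt W T ∧ (x, v) ∈ W.writes ∧
        ∀ W' ∈ Dom H C, lt W' T → WritesOn W' x → W' = W ∨ lt W' W
  read_bot : ∀ T ∈ Dom H C, ∀ x, (x, bot) ∈ T.reads →
      ∀ W ∈ Dom H C, lt W T → ¬ WritesOn W x
  causal_lt : ∀ S ∈ Dom H C, ∀ T ∈ Dom H C, Causal H S T → lt S T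

/-!
`W1` causally precedes `T2`: it is read by `T1`, which precedes `T2` in `C`'s local history.
Hence `W1` is serialized before `T2`, and since it writes `x`, it is at or before the last
writer of `x` preceding `T2`. By uniqueness of written values that last writer is `W2`, so
`W2 < W1` would contradict irreflexivity or transitivity of the serialization order.
-/

namespace LocBefore

variable {H : History Client Obj Val} {c : Client} {S T : Tx Obj Val}

theorem left_mem (h : LocBefore H c S T) : S ∈ H.locals c := by
  obtain ⟨i, -, -, hi, -⟩ := h
  exact List.mem_of_getElem? hi

theorem right_mem (h : LocBefore H c S T) : T ∈ H.locals c := by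
  obtain ⟨-, j, -, -, hj⟩ := h
  exact List.mem_of_getElem? hj

end LocBefore

section Dom

variable {H : History Client Obj Val} {C : Client} {T : Tx Obj Val}

theorem mem_dom_of_mem_writes {p : Obj × Val} (hT : TxIn H T) (hp : p ∈ T.writes) :
    T ∈ Dom H C :=
  Or.inl ⟨hT, p, hp⟩

theorem txIn_of_mem_dom (h : T ∈ Dom H C) : TxIn H T := by
  rcases h with ⟨hT, -⟩ | hT
  · exact hT
  · exact ⟨C, hT⟩

end Dom

namespace IsCausalSerialization

variable {H : History Client Obj Val} {bot : Val} {C : Client}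
  {lt : Tx Obj Val → Tx Obj Val → Prop}

theorem asymm (hser : IsCausalSerialization H bot C lt) {S T : Tx Obj Val}
    (hS : S ∈ Dom H C) (hT : T ∈ Dom H C) (hST : lt S T) : ¬ lt T S :=
  fun hTS => hser.irrefl S hS (hser.trans S hS T hT S hS hST hTS)

theorem eq_or_lt_of_reads (hser : IsCausalSerialization H bot C lt)
    (hU : UniqueWrites H bot) {T W W' : Tx Obj Val} {x : Obj} {v : Val}
    (hT : T ∈ Dom H C) (hr : (x, v) ∈ T.reads) (hv : v ≠ bot)
    (hW : TxIn H W) (hw : (x, v) ∈ W.writes)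
    (hW' : W' ∈ Dom H C) (hW'T : lt W' T) (hW'x : WritesOn W' x) :
    W' = W ∨ lt W' W := by
  obtain ⟨L, hL, -, hLw, hLast⟩ := hser.read_val T hT x v hr hv
  obtain rfl : L = W := (hU.2 L W (txIn_of_mem_dom hL) hW x x v hLw hw).1
  exact hLast W' hW' hW'T hW'x

end IsCausalSerialization

theorem stmt_5_general {Client Obj Val : Type*} (bot : Val)
    (H : History Client Obj Val) (hU : UniqueWrites H bot)
    (C : Client) (T1 T2 : Tx Obj Val)
    (hord : LocBefore H C T1 T2)
    (x : Obj) (v1 v2 : Val) (hv2 : v2 ≠ bot)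
    (hr1 : (x, v1) ∈ T1.reads) (hr2 : (x, v2) ∈ T2.reads)
    (W1 W2 : Tx Obj Val) (hW1 : TxIn H W1) (hW2 : TxIn H W2)
    (hw1 : (x, v1) ∈ W1.writes) (hw2 : (x, v2) ∈ W2.writes)
    (lt : Tx Obj Val → Tx Obj Val → Prop)
    (hser : IsCausalSerialization H bot C lt) :
    ¬ lt W2 W1 := by
  intro hlt
  have hT2 : T2 ∈ Dom H C := Or.inr hord.right_mem
  have hW1dom : W1 ∈ Dom H C := mem_dom_of_mem_writes hW1 hw1
  have hW2dom : W2 ∈ Dom H C := mem_dom_of_mem_writes hW2 hw2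
  have hW1T2 : lt W1 T2 := hser.causal_lt W1 hW1dom T2 hT2 <|
    .trans (.readFrom hW1 ⟨C, hord.left_mem⟩ hw1 hr1) (.prog C hord)
  rcases hser.eq_or_lt_of_reads hU hT2 hr2 hv2 hW2 hw2 hW1dom hW1T2 ⟨v1, hw1⟩ with rfl | h
  · exact hser.irrefl W1 hW1dom hlt
  · exact hser.asymm hW1dom hW2dom h hlt

/-- a later transaction of the same client cannot return a value
for `x` whose writing transaction is serialized strictly before the writing
transaction of the value returned earlier. -/
theorem stmt_5 {Client Obj Val : Type*} (bot : Val)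
    (H : History Client Obj Val) (hU : UniqueWrites H bot)
    (C : Client) (T1 T2 : Tx Obj Val)
    (hord : LocBefore H C T1 T2)
    (x : Obj) (v1 v2 : Val) (hv1 : v1 ≠ bot) (hv2 : v2 ≠ bot)
    (hr1 : (x, v1) ∈ T1.reads) (hr2 : (x, v2) ∈ T2.reads)
    (W1 W2 : Tx Obj Val) (hW1 : TxIn H W1) (hW2 : TxIn H W2)
    (hw1 : (x, v1) ∈ W1.writes) (hw2 : (x, v2) ∈ W2.writes)
    (lt : Tx Obj Val → Tx Obj Val → Prop)
    (hser : IsCausalSerialization H bot C lt) :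
    ¬ lt W2 W1 :=
  stmt_5_general bot H hU C T1 T2 hord x v1 v2 hv2 hr1 hr2 W1 W2 hW1 hW2 hw1 hw2 lt hser
end

section
/- Let H be a history satisfying uniqueness of written values, and suppose each transaction T of H is assigned a real timestamp ts(T), with all assigned timestamps pairwise distinct, such that: (a) timestamps strictly increase along each client's local history; (b) for every read event r(x)v with v ≠ ⊥ in a transaction T, the transaction W of H containing the write event w(x)v satisfies ts(W) < ts(T), and there is no transaction W' containing a write event on x with ts(W) < ts(W') < ts(T); and (c) for every read event r(x)⊥ in a transaction T, no transaction containing a write event on x has timestamp strictly less than ts(T). Then for every client C, the strict order comparing transactions by their timestamps is a transactional causal serialization for C of H. (This is the correctness, at the level of serializations, of the timestamp-based implementation: serializing all operations by accurate timestamps yields causal consistency.) -/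
variable {Client Obj Val : Type*}

/-!
Causality is generated by program order and reads-from. Timestamps increase along program
order by assumption, and along reads-from because, by uniqueness of written values, the
writer of a value that is read is the transaction `W` supplied by the accuracy hypothesis,
so `ts W < ts T`. Hence timestamp order extends causality. The remaining axioms of a
serialization are the accuracy hypotheses themselves, read in the (linear) timestamp order.
-/

variable {H : History Client Obj Val} {bot : Val}

namespace UniqueWrites

theorem ne_bot (hU : UniqueWrites H bot) {T : Tx Obj Val} (hT : TxIn H T) {x : Obj} {v : Val}
    (hw : (x, v) ∈ T.writes) : v ≠ bot :=
  hU.1 T hT x v hw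

theorem eq_of_mem_writes (hU : UniqueWrites H bot) {S T : Tx Obj Val} (hS : TxIn H S)
    (hT : TxIn H T) {x x' : Obj} {v : Val} (hwS : (x, v) ∈ S.writes) (hwT : (x', v) ∈ T.writes) :
    S = T :=
  (hU.2 S T hS hT x x' v hwS hwT).1

end UniqueWrites

theorem txIn_of_mem_dom_s6 {C : Client} {T : Tx Obj Val} (hT : T ∈ Dom H C) : TxIn H T := by
  rcases hT with ⟨hT, -⟩ | hT
  · exact hT
  · exact ⟨C, hT⟩

theorem mem_dom_of_mem_writes_s6 (C : Client) {W : Tx Obj Val} (hW : TxIn H W) {x : Obj} {v : Val}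
    (hw : (x, v) ∈ W.writes) : W ∈ Dom H C :=
  Or.inl ⟨hW, ⟨(x, v), hw⟩⟩

section Timestamps

variable {ts : Tx Obj Val → ℝ}

theorem Causal.ts_lt (hU : UniqueWrites H bot)
    (hprog : ∀ (c : Client) (S T : Tx Obj Val), LocBefore H c S T → ts S < ts T)
    (hread : ∀ T, TxIn H T → ∀ x v, (x, v) ∈ T.reads → v ≠ bot →
      ∃ W, TxIn H W ∧ (x, v) ∈ W.writes ∧ ts W < ts T)
    {S T : Tx Obj Val} (h : Causal H S T) : ts S < ts T := by
  induction h with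
  | prog c h => exact hprog c _ _ h
  | readFrom hS hT hw hr =>
    obtain ⟨W, hW, hwW, hlt⟩ := hread _ hT _ _ hr (hU.ne_bot hS hw)
    exact hU.eq_of_mem_writes hW hS hwW hw ▸ hlt
  | trans _ _ ih₁ ih₂ => exact ih₁.trans ih₂

theorem exists_last_writer_mem_dom (C : Client)
    (hdist : ∀ T T', TxIn H T → TxIn H T' → T ≠ T' → ts T ≠ ts T')
    (hread : ∀ T, TxIn H T → ∀ x v, (x, v) ∈ T.reads → v ≠ bot →
      ∃ W, TxIn H W ∧ (x, v) ∈ W.writes ∧ ts W < ts T ∧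
        ∀ W', TxIn H W' → WritesOn W' x → ¬ (ts W < ts W' ∧ ts W' < ts T))
    {T : Tx Obj Val} (hT : T ∈ Dom H C) {x : Obj} {v : Val} (hr : (x, v) ∈ T.reads)
    (hv : v ≠ bot) :
    ∃ W ∈ Dom H C, ts W < ts T ∧ (x, v) ∈ W.writes ∧
      ∀ W' ∈ Dom H C, ts W' < ts T → WritesOn W' x → W' = W ∨ ts W' < ts W := by
  obtain ⟨W, hW, hwW, hlt, hlast⟩ := hread T (txIn_of_mem_dom_s6 hT) x v hr hv
  refine ⟨W, mem_dom_of_mem_writes_s6 C hW hwW, hlt, hwW, fun W' hW' hlt' hwo => ?_⟩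
  rcases eq_or_ne W' W with heq | hne
  · exact .inl heq
  · rcases (hdist W' W (txIn_of_mem_dom_s6 hW') hW hne).lt_or_gt with hlt'' | hgt
    · exact .inr hlt''
    · exact absurd ⟨hgt, hlt'⟩ (hlast W' (txIn_of_mem_dom_s6 hW') hwo)

end Timestamps

/-- correctness of the timestamp-based implementation at the
level of serializations — comparing transactions by accurate timestamps
yields a transactional causal serialization for every client. -/
theorem stmt_6 {Client Obj Val : Type*} (bot : Val)
    (H : History Client Obj Val) (hU : UniqueWrites H bot)
    (ts : Tx Obj Val → ℝ)
    (hdist : ∀ T T', TxIn H T → TxIn H T' → T ≠ T' → ts T ≠ ts T')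
    (hprog : ∀ (c : Client) (S T : Tx Obj Val), LocBefore H c S T → ts S < ts T)
    (hread : ∀ T, TxIn H T → ∀ x v, (x, v) ∈ T.reads → v ≠ bot →
      ∃ W, TxIn H W ∧ (x, v) ∈ W.writes ∧ ts W < ts T ∧
        ∀ W', TxIn H W' → WritesOn W' x → ¬ (ts W < ts W' ∧ ts W' < ts T))
    (hbot : ∀ T, TxIn H T → ∀ x, (x, bot) ∈ T.reads →
      ∀ W, TxIn H W → WritesOn W x → ¬ ts W < ts T) :
    ∀ C : Client, IsCausalSerialization H bot C (fun S T => ts S < ts T) := by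
  intro C
  have hread' : ∀ T, TxIn H T → ∀ x v, (x, v) ∈ T.reads → v ≠ bot →
      ∃ W, TxIn H W ∧ (x, v) ∈ W.writes ∧ ts W < ts T := fun T hT x v hr hv =>
    let ⟨W, hW, hwW, hlt, _⟩ := hread T hT x v hr hv
    ⟨W, hW, hwW, hlt⟩
  exact
    { irrefl := fun _ _ => lt_irrefl _
      trans := fun _ _ _ _ _ _ => lt_trans
      total := fun S hS T hT hne =>
        (hdist S T (txIn_of_mem_dom_s6 hS) (txIn_of_mem_dom_s6 hT) hne).lt_or_gt
      read_val := fun _ hT _ _ hr hv => exists_last_writer_mem_dom C hdist hread hT hr hv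
      read_bot := fun T hT x hr W hW hlt hwo =>
        hbot T (txIn_of_mem_dom_s6 hT) x hr W (txIn_of_mem_dom_s6 hW) hwo hlt
      causal_lt := fun _ _ _ _ h => h.ts_lt hU hprog hread' }
end
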